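/- arXiv:1501.06389 — 2 statements merged into one kernel-verified Lean document; each statement's English description precedes it below -/
import Mathlib

section
/- Let {τ_n}_{n≥1} be the unique normalized Markov trace on the Iwahori–Hecke algebras {H_n}_{n≥1}. For any n ≥ 1, any k ∈ {1,…,n} and any x, y ∈ H_k (viewed inside H_{n+1} via the natural embeddings), one has τ_{n+1}(xT_ky) = τ_{n+1}(xT_k^{−1}y) = τ_n(xy). -/
noncomputable section

open scoped TensorProduct
open Finset CategoryTheory

namespace YH

/-! ### Ground rings:
`RR = ℂ[u^{±1}, v]`, `LL = ℂ[u^{±1}, v^{±1}]`, `GG = ℂ[u^{±1}, v^{±1}, γ^{±1}]`. -/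

abbrev RR : Type := AddMonoidAlgebra ℂ (ℤ × ℕ)
abbrev LL : Type := AddMonoidAlgebra ℂ (ℤ × ℤ)
abbrev GG : Type := AddMonoidAlgebra ℂ (ℤ × ℤ × ℤ)

def uR : RR := AddMonoidAlgebra.of' ℂ (ℤ × ℕ) (1, 0)
def uRi : RR := AddMonoidAlgebra.of' ℂ (ℤ × ℕ) (-1, 0)
def vR : RR := AddMonoidAlgebra.of' ℂ (ℤ × ℕ) (0, 1)

def uL : LL := AddMonoidAlgebra.of' ℂ (ℤ × ℤ) (1, 0)
def uLi : LL := AddMonoidAlgebra.of' ℂ (ℤ × ℤ) (-1, 0)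
def vL : LL := AddMonoidAlgebra.of' ℂ (ℤ × ℤ) (0, 1)
def vLi : LL := AddMonoidAlgebra.of' ℂ (ℤ × ℤ) (0, -1)

def uG : GG := AddMonoidAlgebra.of' ℂ (ℤ × ℤ × ℤ) (1, 0, 0)
def uGi : GG := AddMonoidAlgebra.of' ℂ (ℤ × ℤ × ℤ) (-1, 0, 0)
def vG : GG := AddMonoidAlgebra.of' ℂ (ℤ × ℤ × ℤ) (0, 1, 0)
def vGi : GG := AddMonoidAlgebra.of' ℂ (ℤ × ℤ × ℤ) (0, -1, 0)
def gG : GG := AddMonoidAlgebra.of' ℂ (ℤ × ℤ × ℤ) (0, 0, 1)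
def gGi : GG := AddMonoidAlgebra.of' ℂ (ℤ × ℤ × ℤ) (0, 0, -1)

/-- The canonical embedding `ℂ[u^{±1},v^{±1}] → ℂ[u^{±1},v^{±1},γ^{±1}]`. -/
def embLG : LL →+* GG :=
  AddMonoidAlgebra.mapDomainRingHom ℂ
    ((AddMonoidHom.id ℤ).prodMap (AddMonoidHom.inl ℤ ℤ))

/-! ### Symmetric group combinatorics -/

/-- The simple transposition `s_i = (i, i+1)` (0-based), or `1` if out of range. -/
def sw {n : ℕ} (i : ℕ) : Equiv.Perm (Fin n) :=
  if h : i + 1 < n then Equiv.swap ⟨i, Nat.lt_of_succ_lt h⟩ ⟨i + 1, h⟩ else 1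

/-- The Coxeter length of a permutation = its number of inversions. -/
def pLen {n : ℕ} (w : Equiv.Perm (Fin n)) : ℕ :=
  ((Finset.univ : Finset (Fin n × Fin n)).filter
    (fun p => p.1 < p.2 ∧ w p.2 < w p.1)).card

def isDescent {n : ℕ} (w : Equiv.Perm (Fin n)) (i : ℕ) : Bool :=
  if h : i + 1 < n then decide (w ⟨i + 1, h⟩ < w ⟨i, Nat.lt_of_succ_lt h⟩) else false

def wordAux {n : ℕ} : ℕ → Equiv.Perm (Fin n) → List ℕ
  | 0, _ => []
  | fuel + 1, w =>
    match (List.range n).find? (fun i => isDescent w i) with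
    | none => []
    | some i => wordAux fuel (w * sw i) ++ [i]

/-- A canonical reduced word for a permutation. -/
def redWord {n : ℕ} (w : Equiv.Perm (Fin n)) : List ℕ := wordAux (n * n) w

/-- The natural extension of a permutation of `Fin n` to `Fin (n+1)` (fixing the last point). -/
def extPerm {n : ℕ} (w : Equiv.Perm (Fin n)) : Equiv.Perm (Fin (n + 1)) :=
  (Equiv.permCongr (finSuccEquivLast (n := n))).symm (Equiv.optionCongr w)

/-- The cycle `(p, p+1, …, n)` (0-based) in `S_{n+1}`, mapping `x ↦ x+1` for `p ≤ x < n`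
and `n ↦ p`. -/
def shiftCycle (n p : ℕ) : Equiv.Perm (Fin (n + 1)) :=
  ((List.range' p (n - p)).map (fun i => sw (n := n + 1) i)).prod

/-! ### The Iwahori–Hecke algebra of type A (presented over any commutative ring) -/

inductive HRel (A : Type) [CommRing A] (u v : A) (n : ℕ) :
    FreeAlgebra A ℕ → FreeAlgebra A ℕ → Prop
  | comm (i j : ℕ) (hij : i + 1 < j) (hj : j + 1 < n) :
      HRel A u v n (FreeAlgebra.ι A i * FreeAlgebra.ι A j)
        (FreeAlgebra.ι A j * FreeAlgebra.ι A i)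
  | braid (i : ℕ) (h : i + 2 < n) :
      HRel A u v n
        (FreeAlgebra.ι A i * FreeAlgebra.ι A (i + 1) * FreeAlgebra.ι A i)
        (FreeAlgebra.ι A (i + 1) * FreeAlgebra.ι A i * FreeAlgebra.ι A (i + 1))
  | quad (i : ℕ) (h : i + 1 < n) :
      HRel A u v n (FreeAlgebra.ι A i * FreeAlgebra.ι A i)
        (algebraMap A (FreeAlgebra A ℕ) (u ^ 2) +
          algebraMap A (FreeAlgebra A ℕ) v * FreeAlgebra.ι A i)
  | kill (i : ℕ) (h : ¬ i + 1 < n) : HRel A u v n (FreeAlgebra.ι A i) 0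

/-- The Iwahori–Hecke algebra `H_n` with generators `T_0, …, T_{n-2}` (0-based indexing
of the `n-1` generators `T_1, …, T_{n-1}` of the paper). -/
abbrev Hecke (A : Type) [CommRing A] (u v : A) (n : ℕ) : Type := RingQuot (HRel A u v n)

/-- The generator `T_i` of the Iwahori–Hecke algebra. -/
def HT (A : Type) [CommRing A] (u v : A) (n i : ℕ) : Hecke A u v n :=
  RingQuot.mkAlgHom A (HRel A u v n) (FreeAlgebra.ι A i)

/-- `T_w` for a permutation `w`, via a (canonical) reduced word. -/
def HTw (A : Type) [CommRing A] (u v : A) (n : ℕ) (w : Equiv.Perm (Fin n)) :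
    Hecke A u v n :=
  ((redWord w).map (fun i => HT A u v n i)).prod

/-- `T̃_w = u^{-ℓ(w)} T_w`; here `ui` is the inverse of `u`. -/
def HTt (A : Type) [CommRing A] (u v ui : A) (n : ℕ) (w : Equiv.Perm (Fin n)) :
    Hecke A u v n :=
  algebraMap A (Hecke A u v n) (ui ^ pLen w) * HTw A u v n w

/-- `f : H_m → H_n` is the block embedding at offset `off` if it sends `T_i` to `T_{off+i}`. -/
def IsBlockEmb (A : Type) [CommRing A] (u v : A) (m n off : ℕ)
    (f : Hecke A u v m →ₐ[A] Hecke A u v n) : Prop :=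
  ∀ i, i + 1 < m → f (HT A u v m i) = HT A u v n (off + i)

/-! ### Compositions -/

/-- The set of `d`-compositions of `n`. -/
def compD (d n : ℕ) : Finset (Fin d → ℕ) := Finset.Nat.antidiagonalTuple d n

/-- `μ_1 + ⋯ + μ_a` (sum of the parts with index `≤ a`). -/
def psumLe {d : ℕ} (μ : Fin d → ℕ) (a : Fin d) : ℕ :=
  ∑ b ∈ Finset.univ.filter (fun b : Fin d => b ≤ a), μ b

/-- `μ_1 + ⋯ + μ_{a-1}` (sum of the parts with index `< a`). -/
def psumLt {d : ℕ} (μ : Fin d → ℕ) (a : Fin d) : ℕ :=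
  ∑ b ∈ Finset.univ.filter (fun b : Fin d => b < a), μ b

/-- `μ^{[a]}` : add 1 to the `a`-th part. -/
def bump {d : ℕ} (μ : Fin d → ℕ) (a : Fin d) : Fin d → ℕ :=
  fun b => if b = a then μ b + 1 else μ b

/-- The base `[μ]` of a composition. -/
def base {d : ℕ} (μ : Fin d → ℕ) : Fin d → ℕ := fun a => if μ a = 0 then 0 else 1

/-- `Comp_d^0` : the set of nonzero `d`-compositions with all parts in `{0,1}`. -/
def comp0F (d : ℕ) : Finset (Fin d → ℕ) :=
  ((Finset.univ : Finset (Fin d → Bool)).image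
    (fun f a => if f a then 1 else 0)).filter (fun μ => μ ≠ fun _ => 0)

/-- The index set `I_μ` (0-based) of the generators of the Young subgroup/parabolic. -/
def Imu {d : ℕ} (μ : Fin d → ℕ) (n : ℕ) : Set ℕ :=
  {i | i + 1 < n ∧ ∀ a : Fin d, i + 1 ≠ psumLe μ a}

/-- The parabolic subalgebra `H^μ ⊆ H_n`. -/
def heckeSub (A : Type) [CommRing A] (u v : A) {d : ℕ} (μ : Fin d → ℕ) (n : ℕ) :
    Subalgebra A (Hecke A u v n) :=
  Algebra.adjoin A {x | ∃ i ∈ Imu μ n, x = HT A u v n i}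

/-! ### The Yokonuma–Hecke algebra -/

abbrev YGen : Type := ℕ ⊕ ℕ

def Fg (A : Type) [CommRing A] (i : ℕ) : FreeAlgebra A YGen :=
  FreeAlgebra.ι A (Sum.inl i)

def Ft (A : Type) [CommRing A] (j : ℕ) : FreeAlgebra A YGen :=
  FreeAlgebra.ι A (Sum.inr j)

/-- The element `e_i = (1/d) ∑_{0 ≤ s ≤ d-1} t_i^s t_{i+1}^{-s}` of the free algebra
(`t^{-s} = t^{(d-s) mod d}` since `t^d = 1`). -/
def Fe (A : Type) [CommRing A] [Algebra ℂ A] (d i : ℕ) : FreeAlgebra A YGen :=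
  algebraMap A (FreeAlgebra A YGen) (algebraMap ℂ A (d : ℂ)⁻¹) *
    ∑ s ∈ Finset.range d, Ft A i ^ s * Ft A (i + 1) ^ ((d - s) % d)

/-- `s_i(j)` on indices. -/
def swapN (i j k : ℕ) : ℕ := if k = i then j else if k = j then i else k

inductive YRel (A : Type) [CommRing A] [Algebra ℂ A] (u v : A) (d n : ℕ) :
    FreeAlgebra A YGen → FreeAlgebra A YGen → Prop
  | gcomm (i j : ℕ) (hij : i + 1 < j) (hj : j + 1 < n) :
      YRel A u v d n (Fg A i * Fg A j) (Fg A j * Fg A i)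
  | gbraid (i : ℕ) (h : i + 2 < n) :
      YRel A u v d n (Fg A i * Fg A (i + 1) * Fg A i)
        (Fg A (i + 1) * Fg A i * Fg A (i + 1))
  | tcomm (i j : ℕ) (hi : i < n) (hj : j < n) :
      YRel A u v d n (Ft A i * Ft A j) (Ft A j * Ft A i)
  | gtrel (i j : ℕ) (hi : i + 1 < n) (hj : j < n) :
      YRel A u v d n (Fg A i * Ft A j) (Ft A (swapN i (i + 1) j) * Fg A i)
  | tord (j : ℕ) (hj : j < n) : YRel A u v d n (Ft A j ^ d) 1
  | quad (i : ℕ) (h : i + 1 < n) :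
      YRel A u v d n (Fg A i * Fg A i)
        (algebraMap A (FreeAlgebra A YGen) (u ^ 2) +
          algebraMap A (FreeAlgebra A YGen) v * (Fe A d i * Fg A i))
  | gkill (i : ℕ) (h : ¬ i + 1 < n) : YRel A u v d n (Fg A i) 0
  | tkill (j : ℕ) (h : ¬ j < n) : YRel A u v d n (Ft A j) 1

/-- The Yokonuma–Hecke algebra `Y_{d,n}`, with generators `g_0, …, g_{n-2}` and
`t_0, …, t_{n-1}` (0-based reindexing of the paper's generators). -/
abbrev Yok (A : Type) [CommRing A] [Algebra ℂ A] (u v : A) (d n : ℕ) : Type :=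
  RingQuot (YRel A u v d n)

def yg (A : Type) [CommRing A] [Algebra ℂ A] (u v : A) (d n i : ℕ) : Yok A u v d n :=
  RingQuot.mkAlgHom A (YRel A u v d n) (Fg A i)

def yt (A : Type) [CommRing A] [Algebra ℂ A] (u v : A) (d n j : ℕ) : Yok A u v d n :=
  RingQuot.mkAlgHom A (YRel A u v d n) (Ft A j)

def ye (A : Type) [CommRing A] [Algebra ℂ A] (u v : A) (d n i : ℕ) : Yok A u v d n :=
  RingQuot.mkAlgHom A (YRel A u v d n) (Fe A d i)

/-- `g_w` via a canonical reduced word. -/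
def ygw (A : Type) [CommRing A] [Algebra ℂ A] (u v : A) (d n : ℕ)
    (w : Equiv.Perm (Fin n)) : Yok A u v d n :=
  ((redWord w).map (fun i => yg A u v d n i)).prod

/-- `g̃_w = u^{-ℓ(w)} g_w`; here `ui` is the inverse of `u`. -/
def ygt (A : Type) [CommRing A] [Algebra ℂ A] (u v ui : A) (d n : ℕ)
    (w : Equiv.Perm (Fin n)) : Yok A u v d n :=
  algebraMap A (Yok A u v d n) (ui ^ pLen w) * ygw A u v d n w

/-! ### Characters of `(ℤ/dℤ)^n` and idempotents -/

/-- A character of `(ℤ/dℤ)^n`, recorded by the exponents `k_j` with `χ(t_j) = ξ^{k_j}`. -/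
abbrev Char (d n : ℕ) : Type := Fin n → ZMod d

/-- A primitive `d`-th root of unity. -/
def xi (d : ℕ) : ℂ := Complex.exp (2 * Real.pi * Complex.I / d)

/-- The action of `S_n` on characters : `w(χ)(t_j) = χ(t_{w^{-1}(j)})`. -/
def permAct {d n : ℕ} (w : Equiv.Perm (Fin n)) (χ : Char d n) : Char d n :=
  fun j => χ (w⁻¹ j)

/-- `Comp(χ)`, the composition of `n` counting how many `t_j` take each character value. -/
def compOf {d n : ℕ} [NeZero d] (χ : Char d n) : Fin d → ℕ :=
  fun a => (Finset.univ.filter (fun j : Fin n => χ j = ((a : ℕ) : ZMod d))).card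

/-- The block of position `j` in the composition `μ`. -/
def blockOf {d : ℕ} (μ : Fin d → ℕ) (j : ℕ) : ZMod d :=
  (((Finset.univ.filter (fun a : Fin d => psumLe μ a ≤ j)).card : ℕ) : ZMod d)

/-- The distinguished character `χ_1^μ` of the orbit attached to `μ`. -/
def chiOne {d : ℕ} (μ : Fin d → ℕ) (n : ℕ) : Char d n := fun j => blockOf μ (j : ℕ)

/-- Extension of a character of `(ℤ/d)^n` to `(ℤ/d)^{n+1}` with last value `ξ_a`. -/
def extChar {d n : ℕ} (χ : Char d n) (a : Fin d) : Char d (n + 1) :=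
  fun j => if h : (j : ℕ) < n then χ ⟨j, h⟩ else ((a : ℕ) : ZMod d)

/-- Membership in the Young subgroup `S^μ` = stabiliser of `χ_1^μ`. -/
def IsYoung {d : ℕ} (μ : Fin d → ℕ) (n : ℕ) (w : Equiv.Perm (Fin n)) : Prop :=
  permAct w (chiOne μ n) = chiOne μ n

/-- The distinguished (minimal length) coset representative `π_χ` with
`π_χ(χ_1^μ) = χ`. -/
def piRep {d n : ℕ} (μ : Fin d → ℕ) (χ : Char d n) : Equiv.Perm (Fin n) :=
  if h : (Finset.univ.filter
      (fun w : Equiv.Perm (Fin n) => permAct w (chiOne μ n) = χ)).Nonempty then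
    (Finset.exists_min_image _ pLen h).choose
  else 1

/-- The primitive idempotent `E_χ` of `Y_{d,n}`. -/
def Echar (A : Type) [CommRing A] [Algebra ℂ A] (u v : A) (d n : ℕ) (χ : Char d n) :
    Yok A u v d n :=
  (((List.finRange n).map (fun j =>
    algebraMap A (Yok A u v d n) (algebraMap ℂ A (d : ℂ)⁻¹) *
      ∑ s ∈ Finset.range d,
        algebraMap A (Yok A u v d n) (algebraMap ℂ A (xi d ^ ((χ j).val * s))) *
          yt A u v d n j ^ ((d - s) % d))).prod)

/-- The central idempotent `E_μ`. -/
def Emu (A : Type) [CommRing A] [Algebra ℂ A] (u v : A) (d n : ℕ) [NeZero d]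
    (μ : Fin d → ℕ) : Yok A u v d n :=
  ∑ χ ∈ Finset.univ.filter (fun χ : Char d n => compOf χ = μ), Echar A u v d n χ

/-- The orbit `O(μ)`, as an index type of the matrix algebra. -/
abbrev OType (d n : ℕ) [NeZero d] (μ : Fin d → ℕ) : Type :=
  {χ : Char d n // compOf χ = μ}

/-- The defining property of the map `Ψ_μ : Y_{d,n} → Mat(H^μ)` (extended by `0` outside
`E_μ Y_{d,n}`, and with matrices indexed by all characters, supported on the orbit of `μ`). -/
def IsPsi (A : Type) [CommRing A] [Algebra ℂ A] (u v ui : A) (d n : ℕ) [NeZero d]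
    (μ : Fin d → ℕ)
    (Ψ : Yok A u v d n →ₗ[A] Matrix (Char d n) (Char d n) (Hecke A u v n)) : Prop :=
  ∀ (χ : Char d n) (w : Equiv.Perm (Fin n)),
    Ψ (Echar A u v d n χ * ygt A u v ui d n w) =
      if compOf χ = μ then
        Matrix.single χ (permAct w⁻¹ χ)
          (HTt A u v ui n ((piRep μ χ)⁻¹ * w * piRep μ (permAct w⁻¹ χ)))
      else 0

/-! ### Markov traces -/

/-- Markov trace conditions (M1)-(M2) for a family of linear forms on the Iwahori–Hecke
algebras. Natural embeddings `H_n ⊆ H_{n+1}` are quantified through their values on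
generators. -/
def IsMarkovH (A : Type) [CommRing A] (u v : A)
    (τ : ∀ m, Hecke A u v m →ₗ[A] A) : Prop :=
  (∀ m, ∀ x y : Hecke A u v m, τ m (x * y) = τ m (y * x)) ∧
  (∀ n, ∀ f : Hecke A u v (n + 1) →ₐ[A] Hecke A u v (n + 2),
    (∀ i, i + 1 < n + 1 → f (HT A u v (n + 1) i) = HT A u v (n + 2) i) →
    ∀ x : Hecke A u v (n + 1),
      τ (n + 2) (f x * HT A u v (n + 2) n) = τ (n + 1) x ∧
      τ (n + 2) (f x * Ring.inverse (HT A u v (n + 2) n)) = τ (n + 1) x)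

/-- The unique normalised Markov trace, with the convention `τ_0 = id`. -/
def IsNormMarkovH (A : Type) [CommRing A] (u v : A)
    (τ : ∀ m, Hecke A u v m →ₗ[A] A) : Prop :=
  IsMarkovH A u v τ ∧ τ 1 1 = 1 ∧
    ∀ c : A, τ 0 (algebraMap A (Hecke A u v 0) c) = c

/-- The Markov condition (M2) for a family of linear forms on the Yokonuma–Hecke algebras. -/
def MarkovCondY (A : Type) [CommRing A] [Algebra ℂ A] (u v : A) (d : ℕ)
    (ρ : ∀ m, Yok A u v d m →ₗ[A] A) : Prop :=
  ∀ n, ∀ f : Yok A u v d (n + 1) →ₐ[A] Yok A u v d (n + 2),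
    ((∀ i, i + 1 < n + 1 → f (yg A u v d (n + 1) i) = yg A u v d (n + 2) i) ∧
     (∀ j, j < n + 1 → f (yt A u v d (n + 1) j) = yt A u v d (n + 2) j)) →
    ∀ x : Yok A u v d (n + 1),
      ρ (n + 2) (f x * yg A u v d (n + 2) n) = ρ (n + 1) x ∧
      ρ (n + 2) (f x * Ring.inverse (yg A u v d (n + 2) n)) = ρ (n + 1) x

/-- A Markov trace on the family of Yokonuma–Hecke algebras. -/
def IsMarkovY (A : Type) [CommRing A] [Algebra ℂ A] (u v : A) (d : ℕ)
    (ρ : ∀ m, Yok A u v d m →ₗ[A] A) : Prop :=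
  (∀ m, ∀ x y : Yok A u v d m, ρ m (x * y) = ρ m (y * x)) ∧ MarkovCondY A u v d ρ

/-- `θ` is the linear form `τ_{μ_1} ⊗ ⋯ ⊗ τ_{μ_d}` on `H^μ ⊆ H_n`. -/
def IsTensorTau (A : Type) [CommRing A] (u v : A)
    (τ : ∀ m, Hecke A u v m →ₗ[A] A) {d : ℕ} (μ : Fin d → ℕ) (n : ℕ)
    (θ : Hecke A u v n →ₗ[A] A) : Prop :=
  ∀ (x : ∀ a : Fin d, Hecke A u v (μ a))
    (f : ∀ a : Fin d, Hecke A u v (μ a) →ₐ[A] Hecke A u v n),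
    (∀ a, IsBlockEmb A u v (μ a) n (psumLt μ a) (f a)) →
    θ (((List.finRange d).map (fun a => f a (x a))).prod) =
      (((List.finRange d).map (fun a => τ (μ a) (x a))).prod)

/-! ### Framed and classical braid groups -/

def bs (i : ℕ) : FreeGroup (ℕ ⊕ ℕ) := FreeGroup.of (Sum.inl i)
def btf (j : ℕ) : FreeGroup (ℕ ⊕ ℕ) := FreeGroup.of (Sum.inr j)

inductive FBRel (d n : ℕ) : FreeGroup (ℕ ⊕ ℕ) → Prop
  | scomm (i j : ℕ) (hij : i + 1 < j) (hj : j + 1 < n) :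
      FBRel d n (bs i * bs j * (bs j * bs i)⁻¹)
  | sbraid (i : ℕ) (h : i + 2 < n) :
      FBRel d n (bs i * bs (i + 1) * bs i * (bs (i + 1) * bs i * bs (i + 1))⁻¹)
  | tcomm (i j : ℕ) (hi : i < n) (hj : j < n) :
      FBRel d n (btf i * btf j * (btf j * btf i)⁻¹)
  | strel (i j : ℕ) (hi : i + 1 < n) (hj : j < n) :
      FBRel d n (bs i * btf j * (btf (swapN i (i + 1) j) * bs i)⁻¹)
  | tord (j : ℕ) (hj : j < n) : FBRel d n (btf j ^ d)
  | skill (i : ℕ) (h : ¬ i + 1 < n) : FBRel d n (bs i)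
  | tkill (j : ℕ) (h : ¬ j < n) : FBRel d n (btf j)

/-- The `ℤ/dℤ`-framed braid group on `n` strands. -/
abbrev FB (d n : ℕ) : Type := PresentedGroup {w | FBRel d n w}

def fbs (d n : ℕ) (i : ℕ) : FB d n := PresentedGroup.of (Sum.inl i)
def fbt (d n : ℕ) (j : ℕ) : FB d n := PresentedGroup.of (Sum.inr j)

inductive CBRel (n : ℕ) : FreeGroup ℕ → Prop
  | comm (i j : ℕ) (hij : i + 1 < j) (hj : j + 1 < n) :
      CBRel n (FreeGroup.of i * FreeGroup.of j * (FreeGroup.of j * FreeGroup.of i)⁻¹)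
  | braid (i : ℕ) (h : i + 2 < n) :
      CBRel n (FreeGroup.of i * FreeGroup.of (i + 1) * FreeGroup.of i *
        (FreeGroup.of (i + 1) * FreeGroup.of i * FreeGroup.of (i + 1))⁻¹)
  | kill (i : ℕ) (h : ¬ i + 1 < n) : CBRel n (FreeGroup.of i)

/-- The classical braid group on `n` strands. -/
abbrev CB (n : ℕ) : Type := PresentedGroup {w | CBRel n w}

def cbs (n : ℕ) (i : ℕ) : CB n := PresentedGroup.of i

/-- The natural inclusion `FB(d,n) → FB(d,n+1)` (characterised on generators). -/
def InclFB (d n : ℕ) (J : FB d n →* FB d (n + 1)) : Prop :=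
  (∀ i, i + 1 < n → J (fbs d n i) = fbs d (n + 1) i) ∧
  (∀ j, j < n → J (fbt d n j) = fbt d (n + 1) j)

/-- Markov equivalence of framed braids (= isotopy of the closures, by the framed
Markov theorem): the equivalence generated by conjugation and stabilisation. -/
inductive MarkovEqF (d : ℕ) (J : ∀ n, FB d n →* FB d (n + 1)) :
    (Σ n, FB d n) → (Σ n, FB d n) → Prop
  | refl (x) : MarkovEqF d J x x
  | symm {x y} : MarkovEqF d J x y → MarkovEqF d J y x
  | trans {x y z} : MarkovEqF d J x y → MarkovEqF d J y z → MarkovEqF d J x z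
  | conj (n : ℕ) (α β : FB d n) : MarkovEqF d J ⟨n, α * β⟩ ⟨n, β * α⟩
  | stabPos (n : ℕ) (α : FB d (n + 1)) :
      MarkovEqF d J ⟨n + 2, J (n + 1) α * fbs d (n + 2) n⟩ ⟨n + 1, α⟩
  | stabNeg (n : ℕ) (α : FB d (n + 1)) :
      MarkovEqF d J ⟨n + 2, J (n + 1) α * (fbs d (n + 2) n)⁻¹⟩ ⟨n + 1, α⟩

/-- The defining property of the homomorphism `δ^γ : A[ℤ/dℤ ≀ B_n] → A Y_{d,n}`:
`σ_i ↦ (γ + (1-γ)e_i) g_i` and `t_j ↦ t_j`. -/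
def IsDeltaY (A : Type) [CommRing A] [Algebra ℂ A] (u v γ : A) (d n : ℕ)
    (h : MonoidAlgebra A (FB d n) →ₐ[A] Yok A u v d n) : Prop :=
  (∀ i, i + 1 < n →
    h (MonoidAlgebra.of A (FB d n) (fbs d n i)) =
      (algebraMap A (Yok A u v d n) γ +
        algebraMap A (Yok A u v d n) (1 - γ) * ye A u v d n i) * yg A u v d n i) ∧
  (∀ j, j < n → h (MonoidAlgebra.of A (FB d n) (fbt d n j)) = yt A u v d n j)

/-- `ch` is the base-change ring homomorphism `LL Y_{d,n} → GG Y_{d,n}` along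
`ℂ[u^{±1},v^{±1}] ⊆ ℂ[u^{±1},v^{±1},γ^{±1}]`. -/
def IsBaseChange (d n : ℕ) (ch : Yok LL uL vL d n →+* Yok GG uG vG d n) : Prop :=
  (∀ i, ch (yg LL uL vL d n i) = yg GG uG vG d n i) ∧
  (∀ j, ch (yt LL uL vL d n j) = yt GG uG vG d n j) ∧
  (∀ c : LL, ch (algebraMap LL (Yok LL uL vL d n) c) =
    algebraMap GG (Yok GG uG vG d n) (embLG c))

/-! ### Miscellaneous algebra notions -/

/-- Morita equivalence of two rings. -/
def MoritaEq (B C : Type) [Ring B] [Ring C] : Prop :=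
  Nonempty (ModuleCat.{0} B ≌ ModuleCat.{0} C)

/-- A `k`-algebra is split semisimple if it is isomorphic to a finite direct sum of
matrix algebras over `k`. -/
def IsSplitSS (k : Type) [Field k] (B : Type) [Ring B] [Algebra k B] : Prop :=
  ∃ (r : ℕ) (m : Fin r → ℕ),
    Nonempty (B ≃ₐ[k] ∀ i : Fin r, Matrix (Fin (m i)) (Fin (m i)) k)

/-- Primitive idempotent of a ring. -/
def IsPrimIdem (B : Type) [Ring B] (e : B) : Prop :=
  IsIdempotentElem e ∧ e ≠ 0 ∧
    ∀ f g : B, IsIdempotentElem f → IsIdempotentElem g → f * g = 0 → g * f = 0 →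
      e = f + g → f = 0 ∨ g = 0

/-! ### The Ariki–Koike algebra -/

inductive AKRel (A : Type) [CommRing A] (Q : ℕ → A) (d : ℕ) (x xinv : A) (n : ℕ) :
    FreeAlgebra A ℕ → FreeAlgebra A ℕ → Prop
  | braid (i : ℕ) (h1 : 1 ≤ i) (h : i + 1 < n) :
      AKRel A Q d x xinv n
        (FreeAlgebra.ι A i * FreeAlgebra.ι A (i + 1) * FreeAlgebra.ι A i)
        (FreeAlgebra.ι A (i + 1) * FreeAlgebra.ι A i * FreeAlgebra.ι A (i + 1))
  | braid0 (h : 1 < n) :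
      AKRel A Q d x xinv n
        (FreeAlgebra.ι A 0 * FreeAlgebra.ι A 1 * FreeAlgebra.ι A 0 * FreeAlgebra.ι A 1)
        (FreeAlgebra.ι A 1 * FreeAlgebra.ι A 0 * FreeAlgebra.ι A 1 * FreeAlgebra.ι A 0)
  | comm (i j : ℕ) (hij : i + 1 < j) (hj : j < n) :
      AKRel A Q d x xinv n (FreeAlgebra.ι A i * FreeAlgebra.ι A j)
        (FreeAlgebra.ι A j * FreeAlgebra.ι A i)
  | quad (i : ℕ) (h1 : 1 ≤ i) (h : i < n) :
      AKRel A Q d x xinv n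
        ((FreeAlgebra.ι A i - algebraMap A (FreeAlgebra A ℕ) x) *
          (FreeAlgebra.ι A i + algebraMap A (FreeAlgebra A ℕ) xinv)) 0
  | cyc (h : 0 < n) :
      AKRel A Q d x xinv n
        (((List.range d).map
          (fun b => FreeAlgebra.ι A 0 - algebraMap A (FreeAlgebra A ℕ) (Q b))).prod) 0
  | kill (i : ℕ) (h : ¬ i < n) : AKRel A Q d x xinv n (FreeAlgebra.ι A i) 0

/-- The Ariki–Koike algebra `H_n^{Q,x}`. -/
abbrev ArikiKoike (A : Type) [CommRing A] (Q : ℕ → A) (d : ℕ) (x xinv : A) (n : ℕ) :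
    Type := RingQuot (AKRel A Q d x xinv n)

/-!
Write `ι` for the natural inclusions `H_m → H_n`. Since `u² T⁻¹ = T - v`, the two Markov
conditions for `ι w ∈ H_{m+2}` combine into `v τ_{m+2}(ι w) = (1 - u²) τ_{m+1}(w)`: moving up one
level multiplies the trace by the same scalar on both sides, so `τ_{n+1}(ι z · T_k) = τ_n(ι z)`
propagates by induction from the Markov condition at `n = k + 1`, and the `T_k⁻¹` case follows
from the `T_k` case through the same identity. Cyclicity of `τ_{n+1}` moves `f y` to the front.
-/

section Hecke

variable {A : Type} [CommRing A] {u v : A}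

lemma HT_eq_zero {n i : ℕ} (h : ¬ i + 1 < n) : HT A u v n i = 0 := by
  simpa [HT] using RingQuot.mkAlgHom_rel A (HRel.kill (u := u) (v := v) i h)

lemma HT_mul_HT_comm {n i j : ℕ} (hij : i + 1 < j) (hj : j + 1 < n) :
    HT A u v n i * HT A u v n j = HT A u v n j * HT A u v n i := by
  simpa [HT] using RingQuot.mkAlgHom_rel A (HRel.comm (u := u) (v := v) i j hij hj)

lemma HT_braid {n i : ℕ} (h : i + 2 < n) :
    HT A u v n i * HT A u v n (i + 1) * HT A u v n i =
      HT A u v n (i + 1) * HT A u v n i * HT A u v n (i + 1) := by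
  simpa [HT] using RingQuot.mkAlgHom_rel A (HRel.braid (u := u) (v := v) i h)

lemma HT_mul_self {n i : ℕ} (h : i + 1 < n) :
    HT A u v n i * HT A u v n i =
      algebraMap A (Hecke A u v n) (u ^ 2) + algebraMap A (Hecke A u v n) v * HT A u v n i := by
  simpa [HT] using RingQuot.mkAlgHom_rel A (HRel.quad (u := u) (v := v) i h)

lemma HT_mul_HT_sub {n i : ℕ} (h : i + 1 < n) :
    HT A u v n i * (HT A u v n i - algebraMap A (Hecke A u v n) v) =
      algebraMap A (Hecke A u v n) (u ^ 2) := by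
  rw [mul_sub, HT_mul_self h, ← Algebra.commutes, add_sub_cancel_right]

lemma isUnit_HT (hu : IsUnit u) {n i : ℕ} (h : i + 1 < n) : IsUnit (HT A u v n i) := by
  have hcomm : Commute (HT A u v n i) (HT A u v n i - algebraMap A (Hecke A u v n) v) :=
    (Commute.refl _).sub_right (Algebra.commutes v _).symm
  refine (hcomm.isUnit_mul_iff.mp ?_).1
  rw [HT_mul_HT_sub h]
  exact (hu.pow 2).map _

lemma algebraMap_mul_inverse_HT (hu : IsUnit u) {n i : ℕ} (h : i + 1 < n) :
    algebraMap A (Hecke A u v n) (u ^ 2) * Ring.inverse (HT A u v n i) =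
      HT A u v n i - algebraMap A (Hecke A u v n) v := by
  rw [Algebra.commutes, ← HT_mul_HT_sub h, Ring.inverse_mul_cancel_left _ _ (isUnit_HT hu h)]

lemma sq_mul_map_mul_inverse_HT (hu : IsUnit u) {n i : ℕ} (h : i + 1 < n)
    (φ : Hecke A u v n →ₗ[A] A) (x : Hecke A u v n) :
    u ^ 2 * φ (x * Ring.inverse (HT A u v n i)) = φ (x * HT A u v n i) - v * φ x := by
  rw [← smul_eq_mul, ← map_smul, ← mul_smul_comm, Algebra.smul_def,
    algebraMap_mul_inverse_HT hu h, mul_sub, map_sub, ← Algebra.commutes, ← Algebra.smul_def,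
    map_smul, smul_eq_mul]

lemma Hecke.algHom_ext {n : ℕ} {B : Type} [Semiring B] [Algebra A B]
    {f g : Hecke A u v n →ₐ[A] B} (h : ∀ i, f (HT A u v n i) = g (HT A u v n i)) : f = g :=
  RingQuot.ringQuot_ext' _ _ _ (FreeAlgebra.hom_ext (funext h))

def heckeIncl (m n : ℕ) (hmn : m ≤ n) : Hecke A u v m →ₐ[A] Hecke A u v n :=
  RingQuot.liftAlgHom A ⟨FreeAlgebra.lift A
      (fun i => if i + 1 < m then HT A u v n i else 0), by
    intro x y r
    induction r with
    | comm i j hij hj =>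
        simp only [map_mul, FreeAlgebra.lift_ι_apply]
        rw [if_pos (by omega), if_pos (by omega)]
        exact HT_mul_HT_comm hij (by omega)
    | braid i hbr =>
        simp only [map_mul, FreeAlgebra.lift_ι_apply]
        rw [if_pos (by omega), if_pos (by omega)]
        exact HT_braid (by omega)
    | quad i hq =>
        simp only [map_mul, map_add, FreeAlgebra.lift_ι_apply, AlgHom.commutes]
        rw [if_pos hq]
        exact HT_mul_self (by omega)
    | kill i hk =>
        simp only [FreeAlgebra.lift_ι_apply, map_zero]
        rw [if_neg hk]⟩

lemma heckeIncl_HT (m n : ℕ) (hmn : m ≤ n) (i : ℕ) :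
    heckeIncl m n hmn (HT A u v m i) = if i + 1 < m then HT A u v n i else 0 := by
  simp [heckeIncl, HT]

lemma heckeIncl_HT_of_lt (m n : ℕ) (hmn : m ≤ n) {i : ℕ} (hi : i + 1 < m) :
    heckeIncl m n hmn (HT A u v m i) = HT A u v n i := by
  rw [heckeIncl_HT, if_pos hi]

lemma eq_heckeIncl_of_map_HT {m n : ℕ} (hmn : m ≤ n) (f : Hecke A u v m →ₐ[A] Hecke A u v n)
    (hf : ∀ i, i + 1 < m → f (HT A u v m i) = HT A u v n i) : f = heckeIncl m n hmn := by
  refine Hecke.algHom_ext fun i => ?_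
  by_cases hi : i + 1 < m
  · rw [hf i hi, heckeIncl_HT_of_lt m n hmn hi]
  · rw [HT_eq_zero hi, map_zero, map_zero]

lemma heckeIncl_refl (m : ℕ) : heckeIncl m m le_rfl = AlgHom.id A (Hecke A u v m) :=
  (eq_heckeIncl_of_map_HT le_rfl (AlgHom.id A _) fun _ _ => rfl).symm

lemma heckeIncl_heckeIncl (l m n : ℕ) (hlm : l ≤ m) (hmn : m ≤ n) (z : Hecke A u v l) :
    heckeIncl m n hmn (heckeIncl l m hlm z) = heckeIncl l n (hlm.trans hmn) z := by
  have hcomp : (heckeIncl m n hmn).comp (heckeIncl l m hlm) =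
      heckeIncl (A := A) (u := u) (v := v) l n (hlm.trans hmn) :=
    eq_heckeIncl_of_map_HT _ _ fun i hi => by
      rw [AlgHom.comp_apply, heckeIncl_HT_of_lt l m hlm hi, heckeIncl_HT_of_lt m n hmn (by omega)]
  rw [← AlgHom.comp_apply, hcomp]

end Hecke

namespace IsMarkovH

variable {A : Type} [CommRing A] {u v : A} {τ : ∀ m, Hecke A u v m →ₗ[A] A}

lemma trace_heckeIncl_mul_HT (hτ : IsMarkovH A u v τ) (m : ℕ) (w : Hecke A u v (m + 1)) :
    τ (m + 2) (heckeIncl (m + 1) (m + 2) (by omega) w * HT A u v (m + 2) m) = τ (m + 1) w :=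
  (hτ.2 m _ (fun _ hi => heckeIncl_HT_of_lt _ _ _ hi) w).1

lemma trace_heckeIncl_mul_inverse_HT (hτ : IsMarkovH A u v τ) (m : ℕ)
    (w : Hecke A u v (m + 1)) :
    τ (m + 2) (heckeIncl (m + 1) (m + 2) (by omega) w * Ring.inverse (HT A u v (m + 2) m)) =
      τ (m + 1) w :=
  (hτ.2 m _ (fun _ hi => heckeIncl_HT_of_lt _ _ _ hi) w).2

lemma mul_trace_heckeIncl (hu : IsUnit u) (hτ : IsMarkovH A u v τ) (m : ℕ)
    (w : Hecke A u v (m + 1)) :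
    v * τ (m + 2) (heckeIncl (m + 1) (m + 2) (by omega) w) = (1 - u ^ 2) * τ (m + 1) w := by
  have h := sq_mul_map_mul_inverse_HT hu (n := m + 2) (i := m) (by omega) (τ (m + 2))
    (heckeIncl (m + 1) (m + 2) (by omega) w)
  rw [hτ.trace_heckeIncl_mul_HT, hτ.trace_heckeIncl_mul_inverse_HT] at h
  linear_combination h

lemma mul_trace_heckeIncl_of_le (hu : IsUnit u) (hτ : IsMarkovH A u v τ) {l n : ℕ}
    (hl : l ≤ n + 1) (z : Hecke A u v l) :
    v * τ (n + 2) (heckeIncl l (n + 2) (by omega) z) =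
      (1 - u ^ 2) * τ (n + 1) (heckeIncl l (n + 1) hl z) := by
  rw [← heckeIncl_heckeIncl l (n + 1) (n + 2) hl (by omega), hτ.mul_trace_heckeIncl hu]

lemma trace_heckeIncl_mul_HT_of_le (hu : IsUnit u) (hv : IsLeftRegular v)
    (hτ : IsMarkovH A u v τ) {k n : ℕ} (hk : k ≤ n) (z : Hecke A u v (k + 1)) :
    τ (n + 2) (heckeIncl (k + 1) (n + 2) (by omega) z * HT A u v (n + 2) k) =
      τ (n + 1) (heckeIncl (k + 1) (n + 1) (by omega) z) := by
  induction n, hk using Nat.le_induction with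
  | base => simpa [heckeIncl_refl] using hτ.trace_heckeIncl_mul_HT k z
  | succ n hkn ih =>
    apply hv
    dsimp only
    have hstep := hτ.mul_trace_heckeIncl hu (n + 1)
      (heckeIncl (k + 1) (n + 2) (by omega) z * HT A u v (n + 2) k)
    rw [map_mul, heckeIncl_heckeIncl, heckeIncl_HT_of_lt _ _ _ (by omega), ih] at hstep
    rw [hstep, hτ.mul_trace_heckeIncl_of_le hu (by omega)]

lemma trace_heckeIncl_mul_inverse_HT_of_le (hu : IsUnit u) (hv : IsLeftRegular v)
    (hτ : IsMarkovH A u v τ) {k n : ℕ} (hk : k ≤ n) (z : Hecke A u v (k + 1)) :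
    τ (n + 2) (heckeIncl (k + 1) (n + 2) (by omega) z * Ring.inverse (HT A u v (n + 2) k)) =
      τ (n + 1) (heckeIncl (k + 1) (n + 1) (by omega) z) := by
  apply (hu.pow 2).isRegular.left
  dsimp only
  rw [sq_mul_map_mul_inverse_HT hu (by omega), trace_heckeIncl_mul_HT_of_le hu hv hτ hk,
    hτ.mul_trace_heckeIncl_of_le hu (by omega)]
  ring

end IsMarkovH

lemma isUnit_uL : IsUnit uL :=
  IsUnit.of_mul_eq_one uLi <| by
    simp [uL, uLi, AddMonoidAlgebra.of'_apply, AddMonoidAlgebra.single_mul_single,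
      AddMonoidAlgebra.one_def]
    rfl

lemma isUnit_vL : IsUnit vL :=
  IsUnit.of_mul_eq_one vLi <| by
    simp [vL, vLi, AddMonoidAlgebra.of'_apply, AddMonoidAlgebra.single_mul_single,
      AddMonoidAlgebra.one_def]
    rfl

/-- Lemma 5.1(i) of the paper: for the unique normalised Markov
trace on the Iwahori–Hecke algebras, `τ_{n+1}(x T_k y) = τ_{n+1}(x T_k^{-1} y) = τ_n(xy)`
for `x, y ∈ H_k`. (0-based reindexing: the paper's `T_k`, `1 ≤ k ≤ n`, is `HT … k` with
`k < n` here, and `H_k` is `Hecke … (k+1)`.) -/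
theorem statement10 (τ : ∀ m, Hecke LL uL vL m →ₗ[LL] LL)
    (hτ : IsNormMarkovH LL uL vL τ)
    (n k : ℕ) (hk : k < n)
    (f : Hecke LL uL vL (k + 1) →ₐ[LL] Hecke LL uL vL (n + 1))
    (hf : ∀ i, i + 1 < k + 1 → f (HT LL uL vL (k + 1) i) = HT LL uL vL (n + 1) i)
    (g : Hecke LL uL vL (k + 1) →ₐ[LL] Hecke LL uL vL n)
    (hg : ∀ i, i + 1 < k + 1 → g (HT LL uL vL (k + 1) i) = HT LL uL vL n i)
    (x y : Hecke LL uL vL (k + 1)) :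
    τ (n + 1) (f x * HT LL uL vL (n + 1) k * f y) = τ n (g (x * y)) ∧
    τ (n + 1) (f x * Ring.inverse (HT LL uL vL (n + 1) k) * f y) = τ n (g (x * y)) := by
  obtain ⟨m, rfl⟩ : ∃ m, n = m + 1 := ⟨n - 1, by omega⟩
  have hkm : k ≤ m := by omega
  have hM := hτ.1
  obtain rfl := eq_heckeIncl_of_map_HT (by omega) f hf
  obtain rfl := eq_heckeIncl_of_map_HT (by omega) g hg
  have hcyc : ∀ t, τ (m + 2) (heckeIncl _ _ _ x * t * heckeIncl _ _ _ y) =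
      τ (m + 2) (heckeIncl (k + 1) (m + 2) (by omega) (y * x) * t) := fun t => by
    rw [hM.1, ← mul_assoc, ← map_mul]
  have hyx : τ (m + 1) (heckeIncl (k + 1) (m + 1) (by omega) (y * x)) =
      τ (m + 1) (heckeIncl (k + 1) (m + 1) (by omega) (x * y)) := by
    rw [map_mul, hM.1, ← map_mul]
  rw [hcyc, hcyc, ← hyx]
  exact ⟨hM.trace_heckeIncl_mul_HT_of_le isUnit_uL isUnit_vL.isRegular.left hkm (y * x),
    hM.trace_heckeIncl_mul_inverse_HT_of_le isUnit_uL isUnit_vL.isRegular.left hkm (y * x)⟩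

end YH
end
end

section
/- Let γ be an indeterminate and R' = ℂ[u^{±1},v^{±1},γ^{±1}]. The assignment σ_i ↦ (γ + (1−γ)e_i)g_i for i = 1,…,n−1 and t_j ↦ t_j for j = 1,…,n extends to an algebra homomorphism δ^γ_{Y,n} : R'[ℤ/dℤ≀B_n] → R'Y_{d,n}; in particular each element (γ + (1−γ)e_i)g_i is invertible in R'Y_{d,n}, with inverse (γ^{−1} + (1−γ^{−1})e_i)g_i^{−1}. -/
noncomputable section

open scoped TensorProduct
open Finset CategoryTheory

section PowAvg

variable (K : Type*) {B : Type*} [Field K] [Ring B] [Algebra K B] (d : ℕ)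

def powAvg (x : B) : B := algebraMap K B (d : K)⁻¹ * ∑ s ∈ range d, x ^ s

variable {K d} {g x x' y : B}

lemma SemiconjBy.powAvg_right (h : SemiconjBy g x x') :
    SemiconjBy g (powAvg K d x) (powAvg K d x') := by
  unfold powAvg
  refine SemiconjBy.mul_right (Algebra.commute_algebraMap_right ((d : K)⁻¹) g) ?_
  simp only [SemiconjBy, mul_sum, sum_mul, (h.pow_right _).eq]

lemma Commute.powAvg_right (h : Commute g x) : Commute g (powAvg K d x) :=
  SemiconjBy.powAvg_right h

lemma Commute.powAvg_powAvg (h : Commute x y) : Commute (powAvg K d x) (powAvg K d y) :=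
  (Commute.powAvg_right (Commute.powAvg_right h).symm).symm

lemma mul_powAvg_of_pow_eq_one (h : x ^ d = 1) : x * powAvg K d x = powAvg K d x := by
  have hgeom : x * ∑ s ∈ range d, x ^ s = ∑ s ∈ range d, x ^ s := by
    have := (geom_sum_succ (x := x) (n := d)).symm.trans geom_sum_succ'
    rw [h, add_comm] at this
    exact add_left_cancel this
  rw [powAvg, ← mul_assoc, (Algebra.commute_algebraMap_right _ x).eq, mul_assoc, hgeom]

lemma powAvg_mul_of_mul_powAvg (hd : (d : K) ≠ 0) (h : y * powAvg K d x = powAvg K d x) :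
    powAvg K d y * powAvg K d x = powAvg K d x := by
  have hpow : ∀ s, y ^ s * powAvg K d x = powAvg K d x := fun s => by
    induction s with
    | zero => rw [pow_zero, one_mul]
    | succ s ih => rw [pow_succ, mul_assoc, h, ih]
  rw [powAvg, mul_assoc, sum_mul, sum_congr rfl fun s _ => hpow s, sum_const, card_range,
    ← Nat.cast_smul_eq_nsmul K, Algebra.smul_def, ← mul_assoc, ← map_mul,
    inv_mul_cancel₀ hd, map_one, one_mul]

lemma isIdempotentElem_powAvg (hd : (d : K) ≠ 0) (h : x ^ d = 1) :
    IsIdempotentElem (powAvg K d x) :=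
  powAvg_mul_of_mul_powAvg hd (mul_powAvg_of_pow_eq_one h)

lemma powAvg_eq_of_mul_eq_one (hd : (d : K) ≠ 0) (hx : x ^ d = 1) (hxy : x * y = 1)
    (hyx : y * x = 1) : powAvg K d y = powAvg K d x := by
  have hc : Commute x y := hxy.trans hyx.symm
  have hy : y ^ d = 1 := by rw [← one_pow d, ← hyx, (Commute.symm hc).mul_pow, hx, mul_one]
  have h₁ : powAvg K d y * powAvg K d x = powAvg K d x := powAvg_mul_of_mul_powAvg hd <| by
    conv_lhs => rw [← mul_powAvg_of_pow_eq_one hx, ← mul_assoc, hyx, one_mul]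
  have h₂ : powAvg K d x * powAvg K d y = powAvg K d y := powAvg_mul_of_mul_powAvg hd <| by
    conv_lhs => rw [← mul_powAvg_of_pow_eq_one hy, ← mul_assoc, hxy, one_mul]
  calc powAvg K d y = powAvg K d x * powAvg K d y := h₂.symm
    _ = powAvg K d y * powAvg K d x := (Commute.powAvg_powAvg hc).eq
    _ = powAvg K d x := h₁

end PowAvg

section Twist

variable {R B : Type*} [CommRing R] [Ring B] [Algebra R B]

def twist (γ : R) (e : B) : B := algebraMap R B γ + algebraMap R B (1 - γ) * e

/-- The inverse `u⁻² g - u⁻² v e` of an element with `g² = u² + v e g`, where `ui = u⁻¹`. -/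
def quadInv (ui v : R) (e g : B) : B :=
  algebraMap R B (ui ^ 2) * g - algebraMap R B (ui ^ 2 * v) * e

lemma AlgHom.map_twist {C : Type*} [Ring C] [Algebra R C] (f : B →ₐ[R] C) (γ : R) (e : B) :
    f (twist γ e) = twist γ (f e) := by
  simp only [twist, map_add, map_mul, AlgHom.commutes]

lemma AlgHom.map_quadInv {C : Type*} [Ring C] [Algebra R C] (f : B →ₐ[R] C) (ui v : R)
    (e g : B) : f (quadInv ui v e g) = quadInv ui v (f e) (f g) := by
  simp only [quadInv, map_sub, map_mul, AlgHom.commutes]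

lemma SemiconjBy.twist_right {g e e' : B} (h : SemiconjBy g e e') (γ : R) :
    SemiconjBy g (twist γ e) (twist γ e') :=
  SemiconjBy.add_right (Algebra.commute_algebraMap_right γ g)
    (SemiconjBy.mul_right (Algebra.commute_algebraMap_right (1 - γ) g) h)

lemma Commute.twist_right {g e : B} (h : Commute g e) (γ : R) : Commute g (twist γ e) :=
  SemiconjBy.twist_right h γ

lemma Commute.twist_twist {e e' : B} (h : Commute e e') (γ γ' : R) :
    Commute (twist γ e) (twist γ' e') :=
  (Commute.twist_right (Commute.twist_right h γ').symm γ).symm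

lemma twist_mul_mul_twist_mul_quadInv {C : Type*} [CommRing C] [Algebra R C]
    {γ γ' u ui v : R} {e g : C} (he : IsIdempotentElem e)
    (hq : g * g = algebraMap R C (u ^ 2) + algebraMap R C v * (e * g))
    (hγ : γ * γ' = 1) (hu : u * ui = 1) :
    twist γ e * g * (twist γ' e * quadInv ui v e g) = 1 := by
  have he' : e * e = e := he
  have hγ' : algebraMap R C γ * algebraMap R C γ' = 1 := by rw [← map_mul, hγ, map_one]
  have hu' : algebraMap R C ui ^ 2 * algebraMap R C u ^ 2 = 1 := by
    rw [← mul_pow, ← map_mul, mul_comm, hu, map_one, one_pow]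
  simp only [twist, quadInv, map_sub, map_mul, map_pow, map_one] at hq ⊢
  -- `(γ + (1-γ)e)(γ' + (1-γ')e) = γγ' + (1-γγ')e + (1-γ)(1-γ')(e² - e)` and
  -- `g (ui² g - ui² v e) = ui² u² + ui² (g² - u² - v e g)`
  linear_combination
    (algebraMap R C γ + (1 - algebraMap R C γ) * e) *
        (algebraMap R C γ' + (1 - algebraMap R C γ') * e) *
        (algebraMap R C ui ^ 2 * hq + hu') +
      (1 - e) * hγ' + (1 - algebraMap R C γ) * (1 - algebraMap R C γ') * he'

open scoped IsMulCommutative in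
lemma Commute.twist_mul_inverse {γ γ' u ui v : R} {e g : B} (heg : Commute e g)
    (he : IsIdempotentElem e)
    (hq : g * g = algebraMap R B (u ^ 2) + algebraMap R B v * (e * g))
    (hγ : γ * γ' = 1) (hu : u * ui = 1) :
    twist γ e * g * (twist γ' e * quadInv ui v e g) = 1 ∧
      twist γ' e * quadInv ui v e g * (twist γ e * g) = 1 := by
  have hcomm : ∀ x ∈ ({e, g} : Set B), ∀ y ∈ ({e, g} : Set B), x * y = y * x := by
    simp only [Set.mem_insert_iff, Set.mem_singleton_iff]
    rintro x (rfl | rfl) y (rfl | rfl)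
    exacts [rfl, heg.eq, heg.eq.symm, rfl]
  have := Algebra.isMulCommutative_adjoin R hcomm
  set C := Algebra.adjoin R ({e, g} : Set B)
  let e' : C := ⟨e, Algebra.subset_adjoin (by simp)⟩
  let g' : C := ⟨g, Algebra.subset_adjoin (by simp)⟩
  have key : twist γ e' * g' * (twist γ' e' * quadInv ui v e' g') = 1 :=
    twist_mul_mul_twist_mul_quadInv (Subtype.ext he) (Subtype.ext hq) hγ hu
  have key₁ := congrArg C.val key
  have key₂ := congrArg C.val ((mul_comm _ _).trans key)
  simp only [map_mul, map_one, AlgHom.map_twist, AlgHom.map_quadInv] at key₁ key₂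
  exact ⟨key₁, key₂⟩

end Twist

section TwistedRelations

variable {M : Type*} [Monoid M]

lemma mul_mul_mul_of_semiconjBy {a b g c c' : M} (h : SemiconjBy g c c') :
    a * g * (c * b) = a * c' * (g * b) := by
  rw [mul_assoc, ← mul_assoc g, h.eq, mul_assoc, mul_assoc]

lemma commute_mul_mul_of_commute {g₀ g₁ c₀ c₁ : M} (hg : Commute g₀ g₁) (hc : Commute c₀ c₁)
    (h₀ : Commute g₀ c₁) (h₁ : Commute g₁ c₀) : Commute (c₀ * g₀) (c₁ * g₁) := by
  rw [Commute, SemiconjBy, mul_mul_mul_of_semiconjBy h₀, mul_mul_mul_of_semiconjBy h₁, hc.eq,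
    hg.eq]

lemma braid_mul_of_semiconjBy {g₀ g₁ c₀₁ c₀₂ c₁₂ : M}
    (hg : g₀ * g₁ * g₀ = g₁ * g₀ * g₁)
    (h₀₁ : Commute c₀₁ c₀₂) (h₀₂ : Commute c₀₁ c₁₂) (h₁₂ : Commute c₀₂ c₁₂)
    (s₀₁₂ : SemiconjBy g₀ c₁₂ c₀₂) (s₀₀₂ : SemiconjBy g₀ c₀₂ c₁₂)
    (s₁₀₁ : SemiconjBy g₁ c₀₁ c₀₂) (s₁₀₂ : SemiconjBy g₁ c₀₂ c₀₁) :
    c₀₁ * g₀ * (c₁₂ * g₁) * (c₀₁ * g₀) = c₁₂ * g₁ * (c₀₁ * g₀) * (c₁₂ * g₁) := by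
  calc c₀₁ * g₀ * (c₁₂ * g₁) * (c₀₁ * g₀)
      = c₀₁ * c₀₂ * c₁₂ * (g₀ * g₁ * g₀) := by
        rw [mul_mul_mul_of_semiconjBy s₀₁₂, mul_mul_mul_of_semiconjBy (s₀₀₂.mul_left s₁₀₁)]
    _ = c₁₂ * c₀₂ * c₀₁ * (g₁ * g₀ * g₁) := by
        rw [hg]
        congr 1
        rw [h₀₁.eq, mul_assoc, h₀₂.eq, ← mul_assoc, h₁₂.eq]
    _ = c₁₂ * g₁ * (c₀₁ * g₀) * (c₁₂ * g₁) := by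
        rw [mul_mul_mul_of_semiconjBy s₁₀₁, mul_mul_mul_of_semiconjBy (s₁₀₂.mul_left s₀₁₂)]

end TwistedRelations

lemma sub_one_mul_mod_eq_sub_mod {d s : ℕ} (hs : s ≤ d) : (d - 1) * s % d = (d - s) % d := by
  obtain rfl | hd := Nat.eq_zero_or_pos d
  · simp
  refine Nat.ModEq.add_right_cancel' s ?_
  rw [Nat.sub_add_cancel hs, Nat.sub_one_mul, Nat.sub_add_cancel (Nat.le_mul_of_pos_left s hd)]
  simp [Nat.ModEq]

lemma AddMonoidAlgebra.of'_mul_of'_neg {k G : Type*} [CommSemiring k] [AddGroup G] (a : G) :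
    AddMonoidAlgebra.of' k G a * AddMonoidAlgebra.of' k G (-a) = 1 := by
  rw [AddMonoidAlgebra.of'_apply, AddMonoidAlgebra.of'_apply, AddMonoidAlgebra.single_mul_single,
    add_neg_cancel, mul_one, AddMonoidAlgebra.one_def]

namespace YH

lemma swapN_left (i : ℕ) : swapN i (i + 1) i = i + 1 := by
  simp [swapN]

lemma swapN_right (i : ℕ) : swapN i (i + 1) (i + 1) = i := by
  simp [swapN]

lemma swapN_of_ne {i k : ℕ} (h₁ : k ≠ i) (h₂ : k ≠ i + 1) : swapN i (i + 1) k = k := by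
  simp [swapN, h₁, h₂]

section Relations

variable {A : Type} [CommRing A] [Algebra ℂ A] (u v : A) (d n : ℕ)

lemma yt_of_not_lt {j : ℕ} (h : ¬ j < n) : yt A u v d n j = 1 :=
  (RingQuot.mkAlgHom_rel A (YRel.tkill (u := u) (v := v) (d := d) j h)).trans (map_one _)

lemma commute_yt_yt (j k : ℕ) : Commute (yt A u v d n j) (yt A u v d n k) := by
  by_cases hj : j < n
  · by_cases hk : k < n
    · simpa only [Commute, SemiconjBy, yt, map_mul] using
        RingQuot.mkAlgHom_rel A (YRel.tcomm (u := u) (v := v) (d := d) j k hj hk)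
    · rw [yt_of_not_lt u v d n hk]
      exact Commute.one_right _
  · rw [yt_of_not_lt u v d n hj]
    exact Commute.one_left _

lemma yt_pow_eq_one (j : ℕ) : yt A u v d n j ^ d = 1 := by
  by_cases hj : j < n
  · simpa only [yt, map_pow, map_one] using
      RingQuot.mkAlgHom_rel A (YRel.tord (u := u) (v := v) (d := d) (n := n) j hj)
  · rw [yt_of_not_lt u v d n hj, one_pow]

lemma semiconjBy_yg_yt {i : ℕ} (hi : i + 1 < n) (j : ℕ) :
    SemiconjBy (yg A u v d n i) (yt A u v d n j) (yt A u v d n (swapN i (i + 1) j)) := by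
  by_cases hj : j < n
  · simpa only [SemiconjBy, yg, yt, map_mul] using
      RingQuot.mkAlgHom_rel A (YRel.gtrel (u := u) (v := v) (d := d) i j hi hj)
  · rw [swapN_of_ne (by omega) (by omega), yt_of_not_lt u v d n hj]
    exact SemiconjBy.one_right _

lemma yg_braid {i : ℕ} (h : i + 2 < n) :
    yg A u v d n i * yg A u v d n (i + 1) * yg A u v d n i =
      yg A u v d n (i + 1) * yg A u v d n i * yg A u v d n (i + 1) := by
  simpa only [yg, map_mul] using
    RingQuot.mkAlgHom_rel A (YRel.gbraid (u := u) (v := v) (d := d) i h)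

lemma commute_yg_yg {i j : ℕ} (hij : i + 1 < j) (hj : j + 1 < n) :
    Commute (yg A u v d n i) (yg A u v d n j) := by
  simpa only [Commute, SemiconjBy, yg, map_mul] using
    RingQuot.mkAlgHom_rel A (YRel.gcomm (u := u) (v := v) (d := d) i j hij hj)

lemma yg_mul_self {i : ℕ} (h : i + 1 < n) :
    yg A u v d n i * yg A u v d n i =
      algebraMap A _ (u ^ 2) + algebraMap A _ v * (ye A u v d n i * yg A u v d n i) := by
  simpa only [yg, ye, map_mul, map_add, AlgHom.commutes] using
    RingQuot.mkAlgHom_rel A (YRel.quad (u := u) (v := v) (d := d) i h)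

end Relations

section Idempotents

variable {A : Type} [CommRing A] [Algebra ℂ A] (u v : A) (d n : ℕ)

def tRatio (j k : ℕ) : Yok A u v d n := yt A u v d n j * yt A u v d n k ^ (d - 1)

def tE (j k : ℕ) : Yok A u v d n := powAvg ℂ d (tRatio u v d n j k)

lemma tRatio_pow {j k s : ℕ} (hs : s ≤ d) :
    tRatio u v d n j k ^ s = yt A u v d n j ^ s * yt A u v d n k ^ ((d - s) % d) := by
  rw [tRatio, (commute_yt_yt u v d n j _ |>.pow_right _).mul_pow, ← pow_mul,
    pow_eq_pow_mod _ (yt_pow_eq_one u v d n k), sub_one_mul_mod_eq_sub_mod hs]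

lemma ye_eq_tE (i : ℕ) : ye A u v d n i = tE u v d n i (i + 1) := by
  simp only [ye, Fe, tE, powAvg, map_mul, map_sum, map_pow, AlgHom.commutes,
    IsScalarTower.algebraMap_apply ℂ A (Yok A u v d n)]
  exact congrArg _ <| sum_congr rfl fun s hs => (tRatio_pow u v d n (mem_range.mp hs).le).symm

lemma semiconjBy_yg_tE {i : ℕ} (hi : i + 1 < n) (j k : ℕ) :
    SemiconjBy (yg A u v d n i) (tE u v d n j k)
      (tE u v d n (swapN i (i + 1) j) (swapN i (i + 1) k)) :=
  SemiconjBy.powAvg_right <| (semiconjBy_yg_yt u v d n hi j).mul_right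
    ((semiconjBy_yg_yt u v d n hi k).pow_right _)

lemma commute_yt_tE (l j k : ℕ) : Commute (yt A u v d n l) (tE u v d n j k) :=
  Commute.powAvg_right <| (commute_yt_yt u v d n l j).mul_right
    ((commute_yt_yt u v d n l k).pow_right _)

lemma commute_tE_tE (j k l m : ℕ) : Commute (tE u v d n j k) (tE u v d n l m) :=
  Commute.powAvg_right <| (commute_yt_tE u v d n l j k).symm.mul_right
    ((commute_yt_tE u v d n m j k).symm.pow_right _)

lemma tRatio_pow_eq_one (j k : ℕ) : tRatio u v d n j k ^ d = 1 := by
  rw [tRatio_pow u v d n le_rfl, Nat.sub_self, Nat.zero_mod, pow_zero, mul_one,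
    yt_pow_eq_one]

variable [NeZero d]

lemma tRatio_mul_tRatio (j k : ℕ) : tRatio u v d n j k * tRatio u v d n k j = 1 := by
  rw [tRatio, tRatio, mul_assoc, ← mul_assoc (_ ^ (d - 1)), pow_sub_one_mul (NeZero.ne d),
    yt_pow_eq_one, one_mul, mul_pow_sub_one (NeZero.ne d), yt_pow_eq_one]

lemma tE_comm (j k : ℕ) : tE u v d n k j = tE u v d n j k :=
  powAvg_eq_of_mul_eq_one (Nat.cast_ne_zero.mpr (NeZero.ne d)) (tRatio_pow_eq_one u v d n j k)
    (tRatio_mul_tRatio u v d n j k) (tRatio_mul_tRatio u v d n k j)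

lemma isIdempotentElem_ye (i : ℕ) : IsIdempotentElem (ye A u v d n i) := by
  rw [ye_eq_tE]
  exact isIdempotentElem_powAvg (Nat.cast_ne_zero.mpr (NeZero.ne d)) (tRatio_pow_eq_one u v d n _ _)

lemma commute_ye_yg {i : ℕ} (hi : i + 1 < n) : Commute (ye A u v d n i) (yg A u v d n i) := by
  have := semiconjBy_yg_tE u v d n hi i (i + 1)
  rw [swapN_left, swapN_right, tE_comm u v d n i] at this
  rw [ye_eq_tE]
  exact Commute.symm this

end Idempotents

section TwistedGenerators

variable {A : Type} [CommRing A] [Algebra ℂ A] (u v γ : A) (d n : ℕ)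

def twistedGen (i : ℕ) : Yok A u v d n := twist γ (ye A u v d n i) * yg A u v d n i

lemma commute_yg_tE {i j k : ℕ} (hi : i + 1 < n) (hj₁ : j ≠ i) (hj₂ : j ≠ i + 1) (hk₁ : k ≠ i)
    (hk₂ : k ≠ i + 1) : Commute (yg A u v d n i) (tE u v d n j k) := by
  have := semiconjBy_yg_tE u v d n hi j k
  rwa [swapN_of_ne hj₁ hj₂, swapN_of_ne hk₁ hk₂] at this

lemma commute_twistedGen {i j : ℕ} (hij : i + 1 < j) (hj : j + 1 < n) :
    Commute (twistedGen u v γ d n i) (twistedGen u v γ d n j) := by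
  simp only [twistedGen, ye_eq_tE]
  exact commute_mul_mul_of_commute (commute_yg_yg u v d n hij hj)
    ((commute_tE_tE u v d n _ _ _ _).twist_twist γ γ)
    ((commute_yg_tE u v d n (by omega) (by omega) (by omega) (by omega) (by omega)).twist_right
      γ)
    ((commute_yg_tE u v d n hj (by omega) (by omega) (by omega) (by omega)).twist_right γ)

lemma twistedGen_braid {i : ℕ} (h : i + 2 < n) :
    twistedGen u v γ d n i * twistedGen u v γ d n (i + 1) * twistedGen u v γ d n i =
      twistedGen u v γ d n (i + 1) * twistedGen u v γ d n i * twistedGen u v γ d n (i + 1) := by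
  have hi : i + 1 < n := by omega
  have hi' : i + 1 + 1 < n := h
  have s₀₁₂ := semiconjBy_yg_tE u v d n hi (i + 1) (i + 1 + 1)
  have s₀₀₂ := semiconjBy_yg_tE u v d n hi i (i + 1 + 1)
  have s₁₀₁ := semiconjBy_yg_tE u v d n hi' i (i + 1)
  have s₁₀₂ := semiconjBy_yg_tE u v d n hi' i (i + 1 + 1)
  rw [swapN_right, swapN_of_ne (by omega) (by omega)] at s₀₁₂
  rw [swapN_left, swapN_of_ne (by omega) (by omega)] at s₀₀₂
  rw [swapN_left, swapN_of_ne (by omega) (by omega)] at s₁₀₁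
  rw [swapN_right, swapN_of_ne (by omega) (by omega)] at s₁₀₂
  simp only [twistedGen, ye_eq_tE]
  exact braid_mul_of_semiconjBy (yg_braid u v d n h)
    ((commute_tE_tE u v d n _ _ _ _).twist_twist γ γ)
    ((commute_tE_tE u v d n _ _ _ _).twist_twist γ γ)
    ((commute_tE_tE u v d n _ _ _ _).twist_twist γ γ)
    (s₀₁₂.twist_right γ) (s₀₀₂.twist_right γ) (s₁₀₁.twist_right γ) (s₁₀₂.twist_right γ)

lemma semiconjBy_twistedGen_yt {i : ℕ} (hi : i + 1 < n) (j : ℕ) :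
    SemiconjBy (twistedGen u v γ d n i) (yt A u v d n j)
      (yt A u v d n (swapN i (i + 1) j)) := by
  rw [twistedGen, ye_eq_tE]
  exact SemiconjBy.mul_left ((commute_yt_tE u v d n _ _ _).twist_right γ).symm
    (semiconjBy_yg_yt u v d n hi j)

lemma twistedGen_mul_inverse [NeZero d] {γ' ui : A} (hγ : γ * γ' = 1) (hu : u * ui = 1)
    {i : ℕ} (hi : i + 1 < n) :
    twistedGen u v γ d n i * (twist γ' (ye A u v d n i) *
        quadInv ui v (ye A u v d n i) (yg A u v d n i)) = 1 ∧
      twist γ' (ye A u v d n i) * quadInv ui v (ye A u v d n i) (yg A u v d n i) *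
        twistedGen u v γ d n i = 1 :=
  (commute_ye_yg u v d n hi).twist_mul_inverse (isIdempotentElem_ye u v d n i)
    (yg_mul_self u v d n hi) hγ hu

end TwistedGenerators

section Delta

variable {A : Type} [CommRing A] [Algebra ℂ A] (u v : A) {γ γ' ui : A} (d n : ℕ) [NeZero d]
  (hγ : γ * γ' = 1) (hu : u * ui = 1)

def framedGenUnit : ℕ ⊕ ℕ → (Yok A u v d n)ˣ :=
  Sum.elim
    (fun i => if hi : i + 1 < n then
      ⟨twistedGen u v γ d n i, _, (twistedGen_mul_inverse u v γ d n hγ hu hi).1,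
        (twistedGen_mul_inverse u v γ d n hγ hu hi).2⟩ else 1)
    (fun j => (IsUnit.of_pow_eq_one (yt_pow_eq_one u v d n j) (NeZero.ne d)).unit)

lemma val_framedGenUnit_inl {i : ℕ} (hi : i + 1 < n) :
    (framedGenUnit u v d n hγ hu (.inl i) : Yok A u v d n) = twistedGen u v γ d n i := by
  simp [framedGenUnit, hi]

lemma val_framedGenUnit_inr (j : ℕ) :
    (framedGenUnit u v d n hγ hu (.inr j) : Yok A u v d n) = yt A u v d n j := rfl

lemma framedGenUnit_rel :
    ∀ r ∈ {w | FBRel d n w}, FreeGroup.lift (framedGenUnit u v d n hγ hu) r = 1 := by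
  rintro r (⟨i, j, hij, hj⟩ | ⟨i, h⟩ | ⟨i, j, hi, hj⟩ | ⟨i, j, hi, hj⟩ | ⟨j, hj⟩ | ⟨i, h⟩ |
    ⟨j, h⟩)
  all_goals simp only [bs, btf, map_mul, map_inv, map_pow, FreeGroup.lift_apply_of,
    mul_inv_eq_one, Units.ext_iff, Units.val_mul, Units.val_pow_eq_pow_val, Units.val_one]
  · rw [val_framedGenUnit_inl u v d n hγ hu (by omega), val_framedGenUnit_inl u v d n hγ hu hj]
    exact commute_twistedGen u v γ d n hij hj
  · rw [val_framedGenUnit_inl u v d n hγ hu (by omega), val_framedGenUnit_inl u v d n hγ hu h]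
    exact twistedGen_braid u v γ d n h
  · exact commute_yt_yt u v d n i j
  · rw [val_framedGenUnit_inl u v d n hγ hu hi]
    exact semiconjBy_twistedGen_yt u v γ d n hi j
  · exact yt_pow_eq_one u v d n j
  · simp [framedGenUnit, h]
  · exact yt_of_not_lt u v d n h

def deltaHom : MonoidAlgebra A (FB d n) →ₐ[A] Yok A u v d n :=
  MonoidAlgebra.lift A (Yok A u v d n) (FB d n)
    ((Units.coeHom _).comp (PresentedGroup.toGroup (framedGenUnit_rel u v d n hγ hu)))

lemma isDeltaY_deltaHom : IsDeltaY A u v γ d n (deltaHom u v d n hγ hu) := by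
  refine ⟨fun i hi => ?_, fun j _ => ?_⟩
  · simp only [deltaHom, fbs, MonoidAlgebra.lift_of, MonoidHom.comp_apply, Units.coeHom_apply,
      PresentedGroup.toGroup.of]
    exact val_framedGenUnit_inl u v d n hγ hu hi
  · simp only [deltaHom, fbt, MonoidAlgebra.lift_of, MonoidHom.comp_apply, Units.coeHom_apply,
      PresentedGroup.toGroup.of]
    exact val_framedGenUnit_inr u v d n hγ hu j

end Delta

theorem exists_isDeltaY {A : Type} [CommRing A] [Algebra ℂ A] (u v γ : A) (d n : ℕ) [NeZero d]
    (hγ : IsUnit γ) (hu : IsUnit u) :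
    ∃ δ : MonoidAlgebra A (FB d n) →ₐ[A] Yok A u v d n, IsDeltaY A u v γ d n δ := by
  obtain ⟨γ', hγ'⟩ := hγ.exists_right_inv
  obtain ⟨ui, hui⟩ := hu.exists_right_inv
  exact ⟨deltaHom u v d n hγ' hui, isDeltaY_deltaHom u v d n hγ' hui⟩

lemma gG_mul_gGi : gG * gGi = 1 := AddMonoidAlgebra.of'_mul_of'_neg (0, 0, 1)

lemma uG_mul_uGi : uG * uGi = 1 := AddMonoidAlgebra.of'_mul_of'_neg (1, 0, 0)

/-- Lemma 6.2 of the paper: the assignment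
`σ_i ↦ (γ + (1-γ)e_i) g_i`, `t_j ↦ t_j` extends to an algebra homomorphism
`δ^γ : R'[ℤ/dℤ ≀ B_n] → R' Y_{d,n}`; in particular each `(γ + (1-γ)e_i) g_i` is
invertible with inverse `(γ^{-1} + (1-γ^{-1})e_i) g_i^{-1}`
(where `g_i^{-1} = u^{-2} g_i - u^{-2} v e_i`). -/
theorem statement16 (d n : ℕ) [NeZero d] :
    (∀ i, i + 1 < n →
      ((algebraMap GG (Yok GG uG vG d n) gG +
          algebraMap GG (Yok GG uG vG d n) (1 - gG) * ye GG uG vG d n i) *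
            yg GG uG vG d n i) *
        ((algebraMap GG (Yok GG uG vG d n) gGi +
          algebraMap GG (Yok GG uG vG d n) (1 - gGi) * ye GG uG vG d n i) *
            (algebraMap GG (Yok GG uG vG d n) (uGi ^ 2) * yg GG uG vG d n i -
              algebraMap GG (Yok GG uG vG d n) (uGi ^ 2 * vG) * ye GG uG vG d n i)) = 1 ∧
      ((algebraMap GG (Yok GG uG vG d n) gGi +
          algebraMap GG (Yok GG uG vG d n) (1 - gGi) * ye GG uG vG d n i) *
            (algebraMap GG (Yok GG uG vG d n) (uGi ^ 2) * yg GG uG vG d n i -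
              algebraMap GG (Yok GG uG vG d n) (uGi ^ 2 * vG) * ye GG uG vG d n i)) *
        ((algebraMap GG (Yok GG uG vG d n) gG +
          algebraMap GG (Yok GG uG vG d n) (1 - gG) * ye GG uG vG d n i) *
            yg GG uG vG d n i) = 1) ∧
    ∃ δ : MonoidAlgebra GG (FB d n) →ₐ[GG] Yok GG uG vG d n,
      IsDeltaY GG uG vG gG d n δ :=
  ⟨fun _ hi => twistedGen_mul_inverse uG vG gG d n gG_mul_gGi uG_mul_uGi hi,
    exists_isDeltaY uG vG gG d n (IsUnit.of_mul_eq_one _ gG_mul_gGi)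
      (IsUnit.of_mul_eq_one _ uG_mul_uGi)⟩

end YH
end
end
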